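/- Let Q be a positive integer, F_Q = {β ∈ ℚ/ℤ : ord(β) ≤ Q}, and for n ∈ ℕ let τ*_Q(n) = #{d : d | n, d ≤ Q, n/d ≤ Q, gcd(d, n/d) = 1}. Then |F_Q + F_Q| = ∑_{n ≤ Q², τ*_Q(n) ≥ 1} φ(n), where φ is Euler's totient function. -/

import Mathlib

/-!
An element `x` of the torsion group `ℚ/ℤ` is a sum of two elements of orders at most `Q` iff
`ord x = d * e` with `d, e ≤ Q` coprime. One direction: `ord (b₁ + b₂)` divides
`lcm (ord b₁) (ord b₂)`, and every divisor of an lcm splits into coprime factors dividing the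
two arguments. The other: Bézout splits `x` into a `d`-torsion and an `e`-torsion part. So
`F_Q + F_Q` is the set of points whose order lies in the index set of the sum, and `ℚ/ℤ` has
exactly `φ n` points of order `n`.
-/

theorem Nat.exists_coprime_mul_eq_of_dvd_lcm {n m₁ m₂ : ℕ} (h : n ∣ m₁.lcm m₂) :
    ∃ d e, d ∣ m₁ ∧ e ∣ m₂ ∧ d.Coprime e ∧ d * e = n := by
  rcases eq_or_ne m₁ 0 with rfl | hm₁
  · exact ⟨n, 1, dvd_zero n, one_dvd m₂, Nat.coprime_one_right n, mul_one n⟩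
  rcases eq_or_ne m₂ 0 with rfl | hm₂
  · exact ⟨1, n, one_dvd m₁, dvd_zero n, Nat.coprime_one_left n, one_mul n⟩
  -- split `n` along the coprime factorisation `lcm m₁ m₂ = L * R`, `L ∣ m₁`, `R ∣ m₂`
  have hLR := Nat.coprime_factorizationLCMLeft_factorizationLCMRight m₁ m₂
  refine ⟨n.gcd (m₁.factorizationLCMLeft m₂), n.gcd (m₁.factorizationLCMRight m₂),
    (Nat.gcd_dvd_right _ _).trans (Nat.factorizationLCMLeft_dvd_left _ _),
    (Nat.gcd_dvd_right _ _).trans (Nat.factorizationLCMRight_dvd_right _ _),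
    (hLR.coprime_dvd_left (Nat.gcd_dvd_right _ _)).coprime_dvd_right (Nat.gcd_dvd_right _ _),
    ?_⟩
  rwa [Nat.gcd_mul_gcd_eq_iff_dvd_mul_of_coprime hLR,
    Nat.factorizationLCMLeft_mul_factorizationLCMRight hm₁ hm₂]

theorem exists_add_eq_of_coprime_of_nsmul_eq_zero {G : Type*} [AddGroup G] {d e : ℕ}
    (hde : d.Coprime e) {x : G} (hx : (d * e) • x = 0) :
    ∃ y z, d • y = 0 ∧ e • z = 0 ∧ y + z = x := by
  obtain ⟨u, v, huv⟩ := Nat.isCoprime_iff_coprime.mpr hde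
  have hx' : ((d : ℤ) * e) • x = 0 := by exact_mod_cast hx
  refine ⟨(v * e) • x, (u * d) • x, ?_, ?_, ?_⟩
  · rw [← natCast_zsmul, smul_smul, show (d : ℤ) * (v * e) = v * (d * e) by ring, mul_smul,
      hx', smul_zero]
  · rw [← natCast_zsmul, smul_smul, show (e : ℤ) * (u * d) = u * (d * e) by ring, mul_smul,
      hx', smul_zero]
  · rw [← add_zsmul, add_comm, huv, one_zsmul]

theorem IsAddTorsion.exists_add_iff {G : Type*} [AddCommGroup G] (hG : IsAddTorsion G)
    (Q : ℕ) (x : G) :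
    (∃ b₁ b₂ : G, addOrderOf b₁ ≤ Q ∧ addOrderOf b₂ ≤ Q ∧ x = b₁ + b₂) ↔
      ∃ d e, d ≤ Q ∧ e ≤ Q ∧ d.Coprime e ∧ d * e = addOrderOf x := by
  constructor
  · rintro ⟨b₁, b₂, h₁, h₂, rfl⟩
    obtain ⟨d, e, hd, he, hde, hx⟩ :=
      Nat.exists_coprime_mul_eq_of_dvd_lcm (AddCommute.all b₁ b₂).addOrderOf_add_dvd_lcm
    exact ⟨d, e, (Nat.le_of_dvd (hG b₁).addOrderOf_pos hd).trans h₁,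
      (Nat.le_of_dvd (hG b₂).addOrderOf_pos he).trans h₂, hde, hx⟩
  · rintro ⟨d, e, hdQ, heQ, hde, hx⟩
    have hpos : 0 < d * e := hx ▸ (hG x).addOrderOf_pos
    obtain ⟨y, z, hy, hz, rfl⟩ :=
      exists_add_eq_of_coprime_of_nsmul_eq_zero hde (hx ▸ addOrderOf_nsmul_eq_zero x)
    exact ⟨y, z,
      (Nat.le_of_dvd (Nat.pos_of_mul_pos_right hpos) (addOrderOf_dvd_of_nsmul_eq_zero hy)).trans
        hdQ,
      (Nat.le_of_dvd (Nat.pos_of_mul_pos_left hpos) (addOrderOf_dvd_of_nsmul_eq_zero hz)).trans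
        heQ,
      rfl⟩

theorem AddCircle.isAddTorsion_rat (p : ℚ) [Fact (0 < p)] : IsAddTorsion (AddCircle p) := by
  intro x
  induction x using QuotientAddGroup.induction_on with
  | H a => exact AddCircle.isOfFinAddOrder_iff_exists_rat_eq_div.mpr ⟨a / p, Rat.cast_id _⟩

theorem Nat.card_subtype_mem_finset {α β : Type*} (f : α → β) (T : Finset β)
    (hT : ∀ b ∈ T, Finite {x // f x = b}) :
    Nat.card {x // f x ∈ T} = ∑ b ∈ T, Nat.card {x // f x = b} := by
  have : ∀ b : T, Finite {x // f x = b} := fun b => hT b b.2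
  rw [← Nat.card_congr (Equiv.sigmaSubtypeFiberEquivSubtype f (q := (· ∈ T)) fun _ => Iff.rfl),
    Nat.card_sigma, Finset.sum_coe_sort T fun b => Nat.card {x // f x = b}]

theorem AddCircle.card_addOrderOf_mem_finset {𝕜 : Type*} [Field 𝕜] [LinearOrder 𝕜]
    [IsStrictOrderedRing 𝕜] (p : 𝕜) [Fact (0 < p)] {T : Finset ℕ} (hT : 0 ∉ T) :
    Nat.card {u : AddCircle p // addOrderOf u ∈ T} = ∑ n ∈ T, n.totient := by
  rw [Nat.card_subtype_mem_finset _ _ fun n hn =>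
    (AddCircle.finite_setOfPred_addOrderOf_eq p
      (Nat.pos_of_ne_zero (ne_of_mem_of_not_mem hn hT))).to_subtype]
  simp only [AddCircle.card_addOrderOf_eq_totient]

theorem mem_filter_unitary_divisor_le_iff (Q n : ℕ) :
    n ∈ (Finset.Icc 1 (Q ^ 2)).filter
        (fun n => ∃ d ∈ n.divisors, d ≤ Q ∧ n / d ≤ Q ∧ Nat.gcd d (n / d) = 1) ↔
      0 < n ∧ ∃ d e, d ≤ Q ∧ e ≤ Q ∧ d.Coprime e ∧ d * e = n := by
  simp only [Finset.mem_filter, Finset.mem_Icc, Nat.mem_divisors]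
  constructor
  · rintro ⟨⟨hn, -⟩, d, ⟨hd, -⟩, hdQ, heQ, hde⟩
    exact ⟨hn, d, n / d, hdQ, heQ, hde, Nat.mul_div_cancel' hd⟩
  · rintro ⟨hn, d, e, hdQ, heQ, hde, rfl⟩
    have hd : 0 < d := Nat.pos_of_mul_pos_right hn
    refine ⟨⟨hn, sq Q ▸ Nat.mul_le_mul hdQ heQ⟩, d, ⟨dvd_mul_right d e, hn.ne'⟩, ?_⟩
    rw [Nat.mul_div_cancel_left e hd]
    exact ⟨hdQ, heQ, hde⟩

theorem stmt_12_general (Q : ℕ) :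
    Nat.card {β : AddCircle (1 : ℚ) | ∃ b₁ b₂ : AddCircle (1 : ℚ),
        addOrderOf b₁ ≤ Q ∧ addOrderOf b₂ ≤ Q ∧ β = b₁ + b₂}
      = ∑ n ∈ (Finset.Icc 1 (Q ^ 2)).filter
          (fun n => ∃ d ∈ n.divisors, d ≤ Q ∧ n / d ≤ Q ∧ Nat.gcd d (n / d) = 1),
          Nat.totient n := by
  have : Fact ((0 : ℚ) < 1) := ⟨one_pos⟩
  have hG := AddCircle.isAddTorsion_rat (1 : ℚ)
  rw [← AddCircle.card_addOrderOf_mem_finset (1 : ℚ) (by simp)]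
  refine Nat.card_congr (Equiv.subtypeEquivRight fun β => ?_)
  rw [Set.mem_ofPred_eq, hG.exists_add_iff, mem_filter_unitary_divisor_le_iff,
    and_iff_right (hG β).addOrderOf_pos]

theorem stmt_12 (Q : ℕ) (hQ : 0 < Q) :
    Nat.card {β : AddCircle (1 : ℚ) | ∃ b₁ b₂ : AddCircle (1 : ℚ),
        addOrderOf b₁ ≤ Q ∧ addOrderOf b₂ ≤ Q ∧ β = b₁ + b₂}
      = ∑ n ∈ (Finset.Icc 1 (Q ^ 2)).filter
          (fun n => ∃ d ∈ n.divisors, d ≤ Q ∧ n / d ≤ Q ∧ Nat.gcd d (n / d) = 1),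
          Nat.totient n :=
  stmt_12_general Q
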